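/- arXiv:1907.13040 — 3 statements merged into one kernel-verified Lean document; each statement's English description precedes it below -/
import Mathlib

section
/- (Iwahori-type double coset decomposition.) Every g ∈ GL₂(F) can be written as g = k·n⁻(c)·b with k ∈ K₁¹(ϖ^r), b ∈ P, and either c ∈ O or c = ∞. Moreover, for c, c' ∈ O with c − c' ∈ ϖ^rO, the double cosets K₁¹(ϖ^r)·n⁻(c)·P and K₁¹(ϖ^r)·n⁻(c')·P coincide. Consequently, the double-coset space K₁¹(ϖ^r)\GL₂(F)/P is covered by the double cosets of the elements n⁻(c), where c runs over a set of representatives of O/ϖ^rO, together with the double coset of n⁻(∞). -/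
/-- The subgroup `K₁¹(ϖ^r)` of `GL₂(F)` (as a set of matrices): matrices with all entries
in `O`, determinant in `O^×`, and reducing to an upper unipotent matrix modulo `ϖ^r`. -/
def K11 (O F : Type*) [CommRing O] [Field F] [Algebra O F] (ϖ : O) (r : ℕ) :
    Set (Matrix (Fin 2) (Fin 2) F) :=
  {g | (∀ i j, ∃ a : O, algebraMap O F a = g i j) ∧
    (∃ u : Oˣ, algebraMap O F (u : O) = g.det) ∧
    (∃ a : O, algebraMap O F (ϖ ^ r * a) = g 0 0 - 1) ∧
    (∃ a : O, algebraMap O F (ϖ ^ r * a) = g 1 0) ∧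
    (∃ a : O, algebraMap O F (ϖ ^ r * a) = g 1 1 - 1)}

/-- The subgroup `P ⊆ GL₂(F)` of invertible upper triangular matrices (as a set of
matrices). -/
def upperBorel (F : Type*) [Field F] : Set (Matrix (Fin 2) (Fin 2) F) :=
  {b | b 1 0 = 0 ∧ b.det ≠ 0}

/-- `n⁻(c) = [[1, 0], [c, 1]]` for `c ∈ O`. -/
def nLower (O F : Type*) [CommRing O] [Field F] [Algebra O F] (c : O) :
    Matrix (Fin 2) (Fin 2) F :=
  !![1, 0; algebraMap O F c, 1]

/-- `n⁻(∞) = [[0, 1], [-1, 0]]`. -/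
def nLowerInf (F : Type*) [Field F] : Matrix (Fin 2) (Fin 2) F :=
  !![0, 1; -1, 0]

/-!
Let `g` have first column `(a, c)`. Since `O` is a valuation ring, `c = γ a` or `a = η c` for
some `γ, η ∈ O`. In the first case `n⁻(-γ) g` is upper triangular, so `g ∈ n⁻(γ) P`; in the
second `n⁻(∞)⁻¹ n⁺(-η) g` is upper triangular, so `g ∈ n⁺(η) n⁻(∞) P`, and the upper unipotent
`n⁺(η)` lies in `K₁¹(ϖ^r)`. Finally `n⁻(c) = n⁻(c - c') n⁻(c')`, and when `c ≡ c' mod ϖ^r`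
the factor `n⁻(c - c')` can be absorbed into `K₁¹(ϖ^r)` from the right.
-/

open DoubleCoset

def nUpper (O F : Type*) [CommRing O] [Field F] [Algebra O F] (y : O) :
    Matrix (Fin 2) (Fin 2) F :=
  !![1, algebraMap O F y; 0, 1]

section Unipotent

variable {O F : Type*} [CommRing O] [Field F] [Algebra O F]

theorem nLower_add (c c' : O) : nLower O F (c + c') = nLower O F c * nLower O F c' := by
  rw [nLower, nLower, nLower, Matrix.mul_fin_two]
  simp [add_comm]

theorem nUpper_add (y y' : O) : nUpper O F (y + y') = nUpper O F y * nUpper O F y' := by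
  rw [nUpper, nUpper, nUpper, Matrix.mul_fin_two]
  simp [add_comm]

theorem nUpper_zero : nUpper O F 0 = 1 := by
  simp [nUpper, Matrix.one_fin_two]

theorem nLower_zero : nLower O F 0 = 1 := by
  simp [nLower, Matrix.one_fin_two]

theorem det_nLower (c : O) : (nLower O F c).det = 1 := by
  simp [nLower, Matrix.det_fin_two_of]

theorem det_nUpper (y : O) : (nUpper O F y).det = 1 := by
  simp [nUpper, Matrix.det_fin_two_of]

theorem nLowerInf_mul_self : nLowerInf F * nLowerInf F = -1 := by
  simp [nLowerInf, Matrix.one_fin_two]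

theorem det_nLowerInf : (nLowerInf F).det = 1 := by
  simp [nLowerInf, Matrix.det_fin_two_of]

variable (ϖ : O) (r : ℕ)

theorem nUpper_mem_K11 (y : O) : nUpper O F y ∈ K11 O F ϖ r := by
  refine ⟨fun i j => ?_, ⟨1, by simp [det_nUpper]⟩, ⟨0, by simp [nUpper]⟩,
    ⟨0, by simp [nUpper]⟩, ⟨0, by simp [nUpper]⟩⟩
  fin_cases i <;> fin_cases j
  exacts [⟨1, by simp [nUpper]⟩, ⟨y, by simp [nUpper]⟩, ⟨0, by simp [nUpper]⟩,
    ⟨1, by simp [nUpper]⟩]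

theorem one_mem_K11 : (1 : Matrix (Fin 2) (Fin 2) F) ∈ K11 O F ϖ r := by
  simpa [nUpper_zero] using nUpper_mem_K11 (F := F) ϖ r 0

theorem mul_nLower_mem_K11 {k : Matrix (Fin 2) (Fin 2) F} (hk : k ∈ K11 O F ϖ r) (a : O) :
    k * nLower O F (ϖ ^ r * a) ∈ K11 O F ϖ r := by
  obtain ⟨hent, ⟨u, hu⟩, ⟨a₀₀, h₀₀⟩, ⟨a₁₀, h₁₀⟩, ⟨a₁₁, h₁₁⟩⟩ := hk
  have col₀ : ∀ i,
      (k * nLower O F (ϖ ^ r * a)) i 0 = k i 0 + k i 1 * algebraMap O F (ϖ ^ r * a) := by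
    intro i; simp [nLower, Matrix.mul_apply, Fin.sum_univ_two]
  have col₁ : ∀ i, (k * nLower O F (ϖ ^ r * a)) i 1 = k i 1 := by
    intro i; simp [nLower, Matrix.mul_apply, Fin.sum_univ_two]
  obtain ⟨b₀₁, hb₀₁⟩ := hent 0 1
  obtain ⟨b₁₁, hb₁₁⟩ := hent 1 1
  refine ⟨fun i j => ?_, ⟨u, by simp [hu, det_nLower]⟩, ⟨a₀₀ + b₀₁ * a, ?_⟩,
    ⟨a₁₀ + b₁₁ * a, ?_⟩, ⟨a₁₁, by rw [col₁, h₁₁]⟩⟩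
  · obtain ⟨x₀, hx₀⟩ := hent i 0
    obtain ⟨x₁, hx₁⟩ := hent i 1
    fin_cases j
    · exact ⟨x₀ + x₁ * (ϖ ^ r * a), by simp [col₀, hx₀, hx₁]⟩
    · exact ⟨x₁, by simp [col₁, hx₁]⟩
  · rw [col₀, ← hb₀₁, add_sub_right_comm, ← h₀₀, ← map_mul, ← map_add]; congr 1; ring
  · rw [col₀, ← hb₁₁, ← h₁₀, ← map_mul, ← map_add]; congr 1; ring

theorem doubleCoset_nLower_subset {c c' : O} (h : ∃ a, c - c' = ϖ ^ r * a) :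
    doubleCoset (nLower O F c) (K11 O F ϖ r) (upperBorel F) ⊆
      doubleCoset (nLower O F c') (K11 O F ϖ r) (upperBorel F) := by
  obtain ⟨a, ha⟩ := h
  rintro x hx
  obtain ⟨k, hk, b, hb, rfl⟩ := mem_doubleCoset.mp hx
  refine mem_doubleCoset.mpr ⟨_, mul_nLower_mem_K11 ϖ r hk a, b, hb, ?_⟩
  rw [← ha, mul_assoc k (nLower O F (c - c')), ← nLower_add, sub_add_cancel]

theorem doubleCoset_nLower_eq {c c' : O} (h : ∃ a, c - c' = ϖ ^ r * a) :
    doubleCoset (nLower O F c) (K11 O F ϖ r) (upperBorel F) =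
      doubleCoset (nLower O F c') (K11 O F ϖ r) (upperBorel F) := by
  obtain ⟨a, ha⟩ := h
  refine (doubleCoset_nLower_subset ϖ r ⟨a, ha⟩).antisymm
    (doubleCoset_nLower_subset ϖ r ⟨-a, ?_⟩)
  rw [mul_neg, ← ha, neg_sub]

end Unipotent

section ValuationRing

variable {O F : Type*} [CommRing O] [IsDomain O] [ValuationRing O] [Field F] [Algebra O F]
  [IsFractionRing O F]

theorem exists_mul_eq_or_exists_mul_eq (a b : F) :
    (∃ c : O, algebraMap O F c * a = b) ∨ ∃ y : O, algebraMap O F y * b = a := by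
  by_cases ha : a = 0
  · exact .inr ⟨0, by simp [ha]⟩
  by_cases hb : b = 0
  · exact .inl ⟨0, by simp [hb]⟩
  rcases ValuationRing.isInteger_or_isInteger O (b / a) with ⟨c, hc⟩ | ⟨y, hy⟩
  · exact .inl ⟨c, by rw [hc, div_mul_cancel₀ _ ha]⟩
  · exact .inr ⟨y, by rw [hy, inv_div, div_mul_cancel₀ _ hb]⟩

theorem exists_K11_upperBorel_decomposition (ϖ : O) (r : ℕ) {g : Matrix (Fin 2) (Fin 2) F}
    (hg : g.det ≠ 0) :
    ∃ k ∈ K11 O F ϖ r, ∃ b ∈ upperBorel F,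
      (∃ c : O, g = k * nLower O F c * b) ∨ g = k * nLowerInf F * b := by
  rcases exists_mul_eq_or_exists_mul_eq (O := O) (g 0 0) (g 1 0) with ⟨c, hc⟩ | ⟨y, hy⟩
  · refine ⟨1, one_mem_K11 ϖ r, nLower O F (-c) * g, ⟨?_, ?_⟩, .inl ⟨c, ?_⟩⟩
    · simp [nLower, Matrix.mul_apply, Fin.sum_univ_two, ← hc]
    · simpa [det_nLower] using hg
    · rw [one_mul, ← mul_assoc, ← nLower_add, add_neg_cancel, nLower_zero, one_mul]
  · refine ⟨nUpper O F y, nUpper_mem_K11 ϖ r y, -(nLowerInf F * nUpper O F (-y) * g), ⟨?_, ?_⟩,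
      .inr ?_⟩
    · simp [nLowerInf, nUpper, Matrix.vecMul, dotProduct, Fin.sum_univ_two, hy]
    · simpa [Matrix.det_neg, det_nLowerInf, det_nUpper] using hg
    · have hinv : nUpper O F y * nLowerInf F * -(nLowerInf F * nUpper O F (-y)) = 1 := by
        rw [mul_neg, mul_assoc, ← mul_assoc (nLowerInf F), nLowerInf_mul_self, neg_one_mul,
          mul_neg, neg_neg, ← nUpper_add, add_neg_cancel, nUpper_zero]
      rw [← neg_mul, ← mul_assoc, hinv, one_mul]

end ValuationRing

theorem iwahori_double_coset_decomposition_general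
    (O : Type*) [CommRing O] [IsDomain O] [IsDiscreteValuationRing O]
    (F : Type*) [Field F] [Algebra O F] [IsFractionRing O F]
    (ϖ : O) (r : ℕ) :
    (∀ g : Matrix (Fin 2) (Fin 2) F, g.det ≠ 0 →
      ∃ k ∈ K11 O F ϖ r, ∃ b ∈ upperBorel F,
        (∃ c : O, g = k * nLower O F c * b) ∨ g = k * nLowerInf F * b) ∧
    (∀ c c' : O, (∃ a : O, c - c' = ϖ ^ r * a) →
      ∀ x : Matrix (Fin 2) (Fin 2) F,
        (∃ k ∈ K11 O F ϖ r, ∃ b ∈ upperBorel F, x = k * nLower O F c * b) ↔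
        (∃ k ∈ K11 O F ϖ r, ∃ b ∈ upperBorel F, x = k * nLower O F c' * b)) ∧
    (∀ Rep : Set O, (∀ c : O, ∃ c' ∈ Rep, ∃ a : O, c - c' = ϖ ^ r * a) →
      ∀ g : Matrix (Fin 2) (Fin 2) F, g.det ≠ 0 →
        ∃ k ∈ K11 O F ϖ r, ∃ b ∈ upperBorel F,
          (∃ c ∈ Rep, g = k * nLower O F c * b) ∨ g = k * nLowerInf F * b) := by
  refine ⟨fun g hg => exists_K11_upperBorel_decomposition ϖ r hg, fun c c' h x => ?_, ?_⟩
  · simpa only [mem_doubleCoset] using Set.ext_iff.mp (doubleCoset_nLower_eq (F := F) ϖ r h) x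
  intro Rep hRep g hg
  obtain ⟨k, hk, b, hb, ⟨c, rfl⟩ | rfl⟩ := exists_K11_upperBorel_decomposition ϖ r hg
  · obtain ⟨c', hc', hcc'⟩ := hRep c
    obtain ⟨k', hk', b', hb', h⟩ := mem_doubleCoset.mp <|
      doubleCoset_nLower_subset ϖ r hcc' (mem_doubleCoset.mpr ⟨k, hk, b, hb, rfl⟩)
    exact ⟨k', hk', b', hb', .inl ⟨c', hc', h⟩⟩
  · exact ⟨k, hk, b, hb, .inr rfl⟩

/-- **Iwahori-type double coset decomposition.**
Let `O` be a discrete valuation ring with fraction field `F` and uniformizer `ϖ`, and fix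
`r ≥ 1`.  (1) Every `g ∈ GL₂(F)` can be written as `g = k·n⁻(c)·b` with `k ∈ K₁¹(ϖ^r)`,
`b ∈ P`, and either `c ∈ O` or `c = ∞`.  (2) For `c, c' ∈ O` with `c − c' ∈ ϖ^r O`, the double
cosets `K₁¹(ϖ^r)·n⁻(c)·P` and `K₁¹(ϖ^r)·n⁻(c')·P` coincide.  (3) Consequently, for any set of
representatives of `O/ϖ^r O`, the double coset space `K₁¹(ϖ^r)\GL₂(F)/P` is covered by the
double cosets of the `n⁻(c)`, `c` running over the representatives, together with that of
`n⁻(∞)`. -/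
theorem iwahori_double_coset_decomposition
    (O : Type*) [CommRing O] [IsDomain O] [IsDiscreteValuationRing O]
    (F : Type*) [Field F] [Algebra O F] [IsFractionRing O F]
    (ϖ : O) (hϖ : Irreducible ϖ) (r : ℕ) (hr : 1 ≤ r) :
    (∀ g : Matrix (Fin 2) (Fin 2) F, g.det ≠ 0 →
      ∃ k ∈ K11 O F ϖ r, ∃ b ∈ upperBorel F,
        (∃ c : O, g = k * nLower O F c * b) ∨ g = k * nLowerInf F * b) ∧
    (∀ c c' : O, (∃ a : O, c - c' = ϖ ^ r * a) →
      ∀ x : Matrix (Fin 2) (Fin 2) F,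
        (∃ k ∈ K11 O F ϖ r, ∃ b ∈ upperBorel F, x = k * nLower O F c * b) ↔
        (∃ k ∈ K11 O F ϖ r, ∃ b ∈ upperBorel F, x = k * nLower O F c' * b)) ∧
    (∀ Rep : Set O, (∀ c : O, ∃ c' ∈ Rep, ∃ a : O, c - c' = ϖ ^ r * a) →
      ∀ g : Matrix (Fin 2) (Fin 2) F, g.det ≠ 0 →
        ∃ k ∈ K11 O F ϖ r, ∃ b ∈ upperBorel F,
          (∃ c ∈ Rep, g = k * nLower O F c * b) ∨ g = k * nLowerInf F * b) :=
  iwahori_double_coset_decomposition_general O F ϖ r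
end

section
/- (Lemma 4.2, right-coset classification of Ξ(ϖ^r)_a.) Let a ∈ F^× with v(a) = s ≥ r. Then: (1) for every b ∈ O_E with q(b) ∈ 1 − a(1 + ϖ^rO_F), the element x(b) belongs to Ξ(ϖ^r)_a; (2) every x ∈ Ξ(ϖ^r)_a lies in x(b)·Ũ for some b ∈ O_E with q(b) ∈ 1 − a(1 + ϖ^rO_F); (3) for b, b' ∈ O_E with q(b), q(b') ∈ 1 − a(1 + ϖ^rO_F), one has x(b)·Ũ = x(b')·Ũ if and only if b − b' ∈ ϖ^{r+s}O_E. Consequently, b ↦ x(b)·Ũ induces a bijection from the quotient of {b ∈ O_E : q(b) ∈ 1 − a(1 + ϖ^rO_F)} by the multiplication action of the group 1 + ϖ^{r+s}O_E onto the set of right cosets {x·Ũ : x ∈ Ξ(ϖ^r)_a}. -/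
/-!
Write `x(b) = 1 + j·ι(b)`. The relations `j² = 1` and `j·ι(x) = ι(x^c)·j` make the decomposition
`M₂(F) = ι(E) ⊕ j·ι(E)` multiplicative:
`(ι w₁ + j ι w₂)(ι z₁ + j ι z₂) = ι(w₁z₁ + w₂^c z₂) + j ι(w₁^c z₂ + w₂z₁)`,
and `det (ι x + j ι y) = q(x) - q(y)`.

Hence `ι x₁ + j ι x₂ = x(x₂x₁⁻¹)·ι(x₁)` with `ι(x₁) ∈ Ũ`, which gives (2). Writing an element of `Ũ`
as `1 + ϖ^r(ι m₁ + j ι m₂)` by the hypothesis on `M₂(O_F)`, the equation `x(b)·u = x(b')` becomes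
`m₁ = -b^c m₂` and `b' = b + ϖ^r (1 - q(b)) m₂`. Since `1 - q(b) = ϖ^s·(unit)`, the coset `x(b)Ũ`
determines `b` exactly modulo `ϖ^(r+s) O_E`, which is (3); (4) follows because `b` is a unit of `O_E`.
-/

/-- The matrix `j := [[1, T], [0, -1]]`. -/
def jmat {F : Type*} [Field F] (T : F) : Matrix (Fin 2) (Fin 2) F :=
  !![1, T; 0, -1]

/-- Membership in `O_E := O_F + θ·O_F ⊆ E`. -/
def inOE (F E : Type*) [Field F] [Field E] [Algebra F E] (O : Subring F) (θ : E)
    (x : E) : Prop :=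
  ∃ a ∈ O, ∃ b ∈ O, x = algebraMap F E a + θ * algebraMap F E b

/-- The subgroup `Ũ = 1 + ϖ^r·M₂(O_F)` of `GL₂(F)` (as a set of matrices). -/
def Utilde (F : Type*) [Field F] (O : Subring F) (ϖF : F) (r : ℕ) :
    Set (Matrix (Fin 2) (Fin 2) F) :=
  {m | ∃ n : Matrix (Fin 2) (Fin 2) F, (∀ i j, n i j ∈ O) ∧ m = 1 + ϖF ^ r • n}

/-- The set `Ξ(ϖ^r) = {ι(x₁) + j·ι(x₂) : x₁ ∈ 1 + ϖ^r O_E, x₂ ∈ O_E, q(x₂) ∈ 1 + ϖ^r O_F}`. -/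
def XiSet (F E : Type*) [Field F] [Field E] [Algebra F E] (O : Subring F) (θ : E)
    (T : F) (c : E → E) (ι : E → Matrix (Fin 2) (Fin 2) F) (ϖF : F) (r : ℕ) :
    Set (Matrix (Fin 2) (Fin 2) F) :=
  {m | ∃ x₁ x₂ : E,
    (∃ y : E, inOE F E O θ y ∧ x₁ = 1 + algebraMap F E (ϖF ^ r) * y) ∧
    inOE F E O θ x₂ ∧
    (∃ u ∈ O, x₂ * c x₂ = algebraMap F E (1 + ϖF ^ r * u)) ∧
    m = ι x₁ + jmat T * ι x₂}

/-- The set `Ξ(ϖ^r)_a = {x ∈ Ξ(ϖ^r) : det x ∈ a(1 + ϖ^r O_F)}`. -/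
def XiSetA (F E : Type*) [Field F] [Field E] [Algebra F E] (O : Subring F) (θ : E)
    (T : F) (c : E → E) (ι : E → Matrix (Fin 2) (Fin 2) F) (ϖF : F) (r : ℕ) (a : F) :
    Set (Matrix (Fin 2) (Fin 2) F) :=
  {m | m ∈ XiSet F E O θ T c ι ϖF r ∧ ∃ u ∈ O, m.det = a * (1 + ϖF ^ r * u)}

/-- The right coset `x·Ũ`. -/
def rightCoset' (F : Type*) [Field F] (O : Subring F) (ϖF : F) (r : ℕ)
    (x : Matrix (Fin 2) (Fin 2) F) : Set (Matrix (Fin 2) (Fin 2) F) :=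
  {m | ∃ u ∈ Utilde F O ϖF r, m = x * u}

namespace OrthogonalDecomposition

section PrincipalUnits

variable {F : Type*} [Field F] {O : Subring F} {π : O} {r : ℕ}

theorem isUnit_one_add_pow_mul [IsLocalRing O] (hπ : ¬IsUnit π) (hr : 0 < r) (t : O) :
    IsUnit (1 + π ^ r * t) := by
  have h : -(π ^ r * t) ∈ nonunits O := by
    rw [mem_nonunits_iff, IsUnit.neg_iff]
    exact fun hu => hπ ((isUnit_pow_iff hr.ne').mp (isUnit_of_mul_isUnit_left hu))
  simpa using IsLocalRing.isUnit_one_sub_self_of_mem_nonunits _ h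

theorem exists_mul_one_add_pow_mul_eq_one [IsLocalRing O] (hπ : ¬IsUnit π) (hr : 0 < r)
    {t : F} (ht : t ∈ O) : ∃ t' ∈ O, (1 + (π : F) ^ r * t) * (1 + (π : F) ^ r * t') = 1 := by
  obtain ⟨u, hu⟩ := isUnit_one_add_pow_mul hπ hr ⟨t, ht⟩
  have hinv : (1 + (π : F) ^ r * t) * ((u⁻¹ : Oˣ) : O) = 1 := by
    simpa [hu] using congrArg ((↑) : O → F) u.mul_inv
  refine ⟨-t * ((u⁻¹ : Oˣ) : O), mul_mem (neg_mem ht) (SetLike.coe_mem _), ?_⟩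
  linear_combination (-(π : F) ^ r * t) * hinv

theorem exists_one_sub_mul_eq {a a' u : F} (ha : a = (π : F) ^ r * a') (ha' : a' ∈ O)
    (hu : u ∈ O) : ∃ u' ∈ O, 1 - a * (1 + (π : F) ^ r * u) = 1 + (π : F) ^ r * u' :=
  ⟨-(a' * (1 + (π : F) ^ r * u)),
    neg_mem (mul_mem ha' (add_mem (one_mem O) (mul_mem (pow_mem π.2 r) hu))), by rw [ha]; ring⟩

theorem one_mem_Utilde : (1 : Matrix (Fin 2) (Fin 2) F) ∈ Utilde F O (π : F) r :=
  ⟨0, fun _ _ => zero_mem O, by simp⟩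

theorem mul_mem_Utilde {u v : Matrix (Fin 2) (Fin 2) F} (hu : u ∈ Utilde F O (π : F) r)
    (hv : v ∈ Utilde F O (π : F) r) : u * v ∈ Utilde F O (π : F) r := by
  obtain ⟨n, hn, rfl⟩ := hu
  obtain ⟨m, hm, rfl⟩ := hv
  refine ⟨n + m + (π : F) ^ r • (n * m), fun i j => ?_, ?_⟩
  · simp only [Matrix.add_apply, Matrix.smul_apply, Matrix.mul_apply, Fin.sum_univ_two,
      smul_eq_mul]
    exact add_mem (add_mem (hn i j) (hm i j)) (mul_mem (pow_mem π.2 r)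
      (add_mem (mul_mem (hn i 0) (hm 0 j)) (mul_mem (hn i 1) (hm 1 j))))
  · simp only [add_mul, mul_add, one_mul, mul_one, Matrix.smul_mul, Matrix.mul_smul, smul_add,
      smul_smul]
    abel

theorem smul_one_mem_Utilde {t : F} (ht : t ∈ O) :
    (1 + (π : F) ^ r * t) • (1 : Matrix (Fin 2) (Fin 2) F) ∈ Utilde F O (π : F) r := by
  refine ⟨t • 1, fun i j => ?_, by rw [add_smul, one_smul, mul_smul]⟩
  rw [Matrix.smul_apply, Matrix.one_apply]
  split_ifs
  exacts [by simpa using ht, by simp]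

theorem adjugate_mem_Utilde {u : Matrix (Fin 2) (Fin 2) F} (hu : u ∈ Utilde F O (π : F) r) :
    u.adjugate ∈ Utilde F O (π : F) r := by
  obtain ⟨n, hn, rfl⟩ := hu
  refine ⟨n.adjugate, fun i j => ?_, ?_⟩
  · rw [Matrix.adjugate_fin_two]
    fin_cases i <;> fin_cases j
    exacts [hn 1 1, neg_mem (hn 0 1), neg_mem (hn 1 0), hn 0 0]
  · rw [Matrix.adjugate_fin_two, Matrix.adjugate_fin_two]
    ext i j
    fin_cases i <;> fin_cases j <;> simp

theorem exists_det_eq_of_mem_Utilde {u : Matrix (Fin 2) (Fin 2) F}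
    (hu : u ∈ Utilde F O (π : F) r) : ∃ t ∈ O, u.det = 1 + (π : F) ^ r * t := by
  obtain ⟨n, hn, rfl⟩ := hu
  refine ⟨n 0 0 + n 1 1 + (π : F) ^ r * (n 0 0 * n 1 1 - n 0 1 * n 1 0),
    add_mem (add_mem (hn 0 0) (hn 1 1)) (mul_mem (pow_mem π.2 r)
      (sub_mem (mul_mem (hn 0 0) (hn 1 1)) (mul_mem (hn 0 1) (hn 1 0)))), ?_⟩
  rw [Matrix.det_fin_two]
  simp only [Matrix.add_apply, Matrix.smul_apply, Matrix.one_apply_eq, smul_eq_mul,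
    Matrix.one_apply_ne zero_ne_one, Matrix.one_apply_ne one_ne_zero, zero_add]
  ring

theorem exists_mul_eq_one_of_mem_Utilde [IsLocalRing O] (hπ : ¬IsUnit π) (hr : 0 < r)
    {u : Matrix (Fin 2) (Fin 2) F} (hu : u ∈ Utilde F O (π : F) r) :
    ∃ v ∈ Utilde F O (π : F) r, u * v = 1 := by
  obtain ⟨t, ht, hdet⟩ := exists_det_eq_of_mem_Utilde hu
  obtain ⟨t', ht', htt'⟩ := exists_mul_one_add_pow_mul_eq_one hπ hr ht
  refine ⟨(1 + (π : F) ^ r * t') • u.adjugate, ?_, ?_⟩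
  · rw [← smul_one_mul]
    exact mul_mem_Utilde (smul_one_mem_Utilde ht') (adjugate_mem_Utilde hu)
  · rw [Matrix.mul_smul, Matrix.mul_adjugate, hdet, smul_smul, mul_comm, htt', one_smul]

theorem rightCoset'_mul_of_mem_Utilde [IsLocalRing O] (hπ : ¬IsUnit π) (hr : 0 < r)
    {x u : Matrix (Fin 2) (Fin 2) F} (hu : u ∈ Utilde F O (π : F) r) :
    rightCoset' F O (π : F) r (x * u) = rightCoset' F O (π : F) r x := by
  obtain ⟨v, hv, huv⟩ := exists_mul_eq_one_of_mem_Utilde hπ hr hu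
  ext m
  constructor
  · rintro ⟨w, hw, rfl⟩
    exact ⟨u * w, mul_mem_Utilde hu hw, mul_assoc _ _ _⟩
  · rintro ⟨w, hw, rfl⟩
    exact ⟨v * w, mul_mem_Utilde hv hw, by rw [mul_assoc, ← mul_assoc u, huv, one_mul]⟩

theorem mem_rightCoset'_self (x : Matrix (Fin 2) (Fin 2) F) :
    x ∈ rightCoset' F O (π : F) r x :=
  ⟨1, one_mem_Utilde, (mul_one x).symm⟩

end PrincipalUnits

section QuadraticExtension

variable {F E : Type*} [Field F] [Field E] [Algebra F E] {T N : F} {θ : E} {c : E ≃ₐ[F] E}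
  {ι : E → Matrix (Fin 2) (Fin 2) F} {O : Subring F} {ϖ : O} {r : ℕ}
  (hθ : θ ^ 2 = algebraMap F E T * θ - algebraMap F E N) (hcθ : c θ = algebraMap F E T - θ)
  (hspan : ∀ x : E, ∃ a b : F, x = algebraMap F E a + θ * algebraMap F E b)
  (hι : ∀ a b : F, ι (algebraMap F E a + θ * algebraMap F E b) = !![a + b * T, b * N; -b, a])
  (hT : T ∈ O) (hN : N ∈ O)

include hθ in
theorem mk_mul_mk (a b a' b' : F) :
    (algebraMap F E a + θ * algebraMap F E b) * (algebraMap F E a' + θ * algebraMap F E b') =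
      algebraMap F E (a * a' - N * b * b') +
        θ * algebraMap F E (a * b' + a' * b + T * b * b') := by
  simp only [map_add, map_sub, map_mul]
  linear_combination algebraMap F E b * algebraMap F E b' * hθ

include hcθ in
theorem conj_mk (a b : F) :
    c (algebraMap F E a + θ * algebraMap F E b) =
      algebraMap F E (a + T * b) + θ * algebraMap F E (-b) := by
  simp only [map_add, map_mul, map_neg, AlgEquiv.commutes, hcθ]
  ring

include hθ hcθ in
theorem mk_mul_conj_mk (a b : F) :
    (algebraMap F E a + θ * algebraMap F E b) * c (algebraMap F E a + θ * algebraMap F E b) =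
      algebraMap F E (a ^ 2 + T * a * b + N * b ^ 2) := by
  rw [conj_mk hcθ, mk_mul_mk hθ]
  simp only [map_add, map_sub, map_mul, map_neg, map_pow]
  ring

include hcθ hspan in
theorem conj_conj (x : E) : c (c x) = x := by
  obtain ⟨a, b, rfl⟩ := hspan x
  rw [conj_mk hcθ, conj_mk hcθ]
  simp only [map_add, map_mul, map_neg]
  ring

include hθ in
theorem discr_ne_zero (hsep : algebraMap F E T - θ ≠ θ) : T ^ 2 - 4 * N ≠ 0 := by
  intro h
  have hsq : (algebraMap F E T - θ - θ) ^ 2 = algebraMap F E (T ^ 2 - 4 * N) := by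
    simp only [map_sub, map_pow, map_mul, map_ofNat]
    linear_combination 4 * hθ
  rw [h, map_zero, sq_eq_zero_iff, sub_eq_zero] at hsq
  exact hsep hsq

theorem jmat_mul_self : jmat T * jmat T = 1 := by
  rw [jmat, Matrix.mul_fin_two, Matrix.one_fin_two]
  simp

include hι in
theorem ι_one : ι 1 = 1 := by
  simpa [Matrix.one_fin_two] using hι 1 0

include hspan hι in
theorem ι_add (x y : E) : ι (x + y) = ι x + ι y := by
  obtain ⟨a, b, rfl⟩ := hspan x
  obtain ⟨a', b', rfl⟩ := hspan y
  rw [show algebraMap F E a + θ * algebraMap F E b + (algebraMap F E a' + θ * algebraMap F E b') =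
    algebraMap F E (a + a') + θ * algebraMap F E (b + b') by simp only [map_add]; ring, hι, hι, hι]
  ext i j
  fin_cases i <;> fin_cases j <;> simp <;> ring

include hspan hι in
theorem ι_algebraMap_mul (t : F) (x : E) : ι (algebraMap F E t * x) = t • ι x := by
  obtain ⟨a, b, rfl⟩ := hspan x
  rw [show algebraMap F E t * (algebraMap F E a + θ * algebraMap F E b) =
    algebraMap F E (t * a) + θ * algebraMap F E (t * b) by simp only [map_mul]; ring, hι, hι]
  ext i j
  fin_cases i <;> fin_cases j <;> simp <;> ring

include hθ hspan hι in
theorem ι_mul (x y : E) : ι (x * y) = ι x * ι y := by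
  obtain ⟨a, b, rfl⟩ := hspan x
  obtain ⟨a', b', rfl⟩ := hspan y
  rw [mk_mul_mk hθ, hι, hι, hι, Matrix.mul_fin_two]
  ext i j
  fin_cases i <;> fin_cases j <;> simp <;> ring

include hcθ hspan hι in
theorem jmat_mul_ι (x : E) : jmat T * ι x = ι (c x) * jmat T := by
  obtain ⟨a, b, rfl⟩ := hspan x
  rw [conj_mk hcθ, hι, hι, jmat, Matrix.mul_fin_two, Matrix.mul_fin_two]
  ext i j
  fin_cases i <;> fin_cases j <;> simp <;> ring

include hcθ hspan hι in
theorem ι_mul_jmat (x : E) : ι x * jmat T = jmat T * ι (c x) := by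
  rw [jmat_mul_ι hcθ hspan hι, conj_conj hcθ hspan]

include hθ hcθ hspan hι in
theorem decomp_mul (w₁ w₂ z₁ z₂ : E) :
    (ι w₁ + jmat T * ι w₂) * (ι z₁ + jmat T * ι z₂) =
      ι (w₁ * z₁ + c w₂ * z₂) + jmat T * ι (c w₁ * z₂ + w₂ * z₁) := by
  have hjj : jmat T * ι w₂ * (jmat T * ι z₂) = ι (c w₂) * ι z₂ := by
    rw [← mul_assoc, mul_assoc (jmat T), ι_mul_jmat hcθ hspan hι, ← mul_assoc, jmat_mul_self,
      one_mul]
  simp only [ι_add hspan hι, ι_mul hθ hspan hι, mul_add, add_mul, hjj]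
  rw [← mul_assoc (ι w₁), ι_mul_jmat hcθ hspan hι]
  noncomm_ring

include hθ hcθ hspan hι in
theorem one_add_jmat_mul_ι_mul_one_add_smul (t : F) (b m₁ m₂ : E) :
    (1 + jmat T * ι b) * (1 + t • (ι m₁ + jmat T * ι m₂)) =
      ι (1 + algebraMap F E t * (m₁ + c b * m₂)) +
        jmat T * ι (b + algebraMap F E t * (m₂ + b * m₁)) := by
  have h₀ : 1 + jmat T * ι b = ι 1 + jmat T * ι b := by rw [ι_one hι]
  have h₁ : 1 + t • (ι m₁ + jmat T * ι m₂) =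
      ι (1 + algebraMap F E t * m₁) + jmat T * ι (algebraMap F E t * m₂) := by
    rw [ι_add hspan hι, ι_one hι, ι_algebraMap_mul hspan hι, ι_algebraMap_mul hspan hι,
      smul_add, Matrix.mul_smul, add_assoc]
  rw [h₀, h₁, decomp_mul hθ hcθ hspan hι, map_one]
  congr 2
  · ring
  · congr 1
    ring

include hθ hcθ hspan hι in
theorem det_ι (x : E) : algebraMap F E (ι x).det = x * c x := by
  obtain ⟨a, b, rfl⟩ := hspan x
  rw [mk_mul_conj_mk hθ hcθ, hι, Matrix.det_fin_two_of]
  congr 1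
  ring

include hθ hcθ hspan hι in
theorem det_decomp (x y : E) :
    algebraMap F E (ι x + jmat T * ι y).det = x * c x - y * c y := by
  obtain ⟨a, b, rfl⟩ := hspan x
  obtain ⟨a', b', rfl⟩ := hspan y
  rw [mk_mul_conj_mk hθ hcθ, mk_mul_conj_mk hθ hcθ, ← map_sub, hι, hι, jmat, Matrix.mul_fin_two,
    Matrix.det_fin_two]
  congr 1
  simp only [Matrix.add_apply, Matrix.of_apply, Matrix.cons_val', Matrix.cons_val_zero,
    Matrix.cons_val_one, Matrix.cons_val_fin_one]
  ring

include hspan hι in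
theorem decomp_eq_zero (hd : T ^ 2 - 4 * N ≠ 0) {x y : E} (h : ι x + jmat T * ι y = 0) :
    x = 0 ∧ y = 0 := by
  obtain ⟨a, b, rfl⟩ := hspan x
  obtain ⟨a', b', rfl⟩ := hspan y
  rw [hι, hι, jmat, Matrix.mul_fin_two] at h
  have h00 := congrFun (congrFun h 0) 0
  have h01 := congrFun (congrFun h 0) 1
  have h10 := congrFun (congrFun h 1) 0
  have h11 := congrFun (congrFun h 1) 1
  simp only [Matrix.add_apply, Matrix.of_apply, Matrix.cons_val', Matrix.cons_val_zero,
    Matrix.cons_val_one, Matrix.cons_val_fin_one, Matrix.zero_apply] at h00 h01 h10 h11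
  -- a linear system in `a, b` whose determinant is the discriminant `T² - 4N`
  have hb : b = 0 := by
    refine (mul_eq_zero.mp ?_).resolve_right hd
    linear_combination T * h00 - 2 * h01 + 2 * N * h10 - T * h11
  have ha : a = 0 := by
    refine (mul_eq_zero.mp ?_).resolve_right hd
    linear_combination T * h01 - 2 * N * h00 + (T ^ 2 - 2 * N) * h11 - T * N * h10
  obtain rfl : b' = 0 := by linear_combination h10 + hb
  obtain rfl : a' = 0 := by linear_combination ha - h11
  simp [ha, hb]

include hspan hι in
theorem decomp_injective (hd : T ^ 2 - 4 * N ≠ 0) {x y x' y' : E}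
    (h : ι x + jmat T * ι y = ι x' + jmat T * ι y') : x = x' ∧ y = y' := by
  have hι_sub : ∀ u v, ι (u - v) = ι u - ι v := fun u v => by
    rw [eq_sub_iff_add_eq, ← ι_add hspan hι, sub_add_cancel]
  have hsub : ι (x - x') + jmat T * ι (y - y') = 0 := by
    rw [hι_sub, hι_sub, mul_sub, ← sub_eq_zero.mpr h]
    abel
  simpa [sub_eq_zero] using decomp_eq_zero hspan hι hd hsub

theorem inOE_algebraMap {t : F} (ht : t ∈ O) : inOE F E O θ (algebraMap F E t) :=
  ⟨t, ht, 0, zero_mem O, by simp⟩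

theorem inOE_add {x y : E} (hx : inOE F E O θ x) (hy : inOE F E O θ y) :
    inOE F E O θ (x + y) := by
  obtain ⟨a, ha, b, hb, rfl⟩ := hx
  obtain ⟨a', ha', b', hb', rfl⟩ := hy
  exact ⟨a + a', add_mem ha ha', b + b', add_mem hb hb', by simp only [map_add]; ring⟩

theorem inOE_neg {x : E} (hx : inOE F E O θ x) : inOE F E O θ (-x) := by
  obtain ⟨a, ha, b, hb, rfl⟩ := hx
  exact ⟨-a, neg_mem ha, -b, neg_mem hb, by simp only [map_neg]; ring⟩

include hθ hT hN in
theorem inOE_mul {x y : E} (hx : inOE F E O θ x) (hy : inOE F E O θ y) :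
    inOE F E O θ (x * y) := by
  obtain ⟨a, ha, b, hb, rfl⟩ := hx
  obtain ⟨a', ha', b', hb', rfl⟩ := hy
  exact ⟨_, sub_mem (mul_mem ha ha') (mul_mem (mul_mem hN hb) hb'),
    _, add_mem (add_mem (mul_mem ha hb') (mul_mem ha' hb)) (mul_mem (mul_mem hT hb) hb'),
    mk_mul_mk hθ a b a' b'⟩

include hcθ hT in
theorem inOE_conj {x : E} (hx : inOE F E O θ x) : inOE F E O θ (c x) := by
  obtain ⟨a, ha, b, hb, rfl⟩ := hx
  exact ⟨_, add_mem ha (mul_mem hT hb), _, neg_mem hb, conj_mk hcθ a b⟩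

include hθ hcθ hT hN in
theorem exists_mul_eq_one_of_mul_conj {x : E} {e e' : F} (hx : inOE F E O θ x)
    (hxe : x * c x = algebraMap F E e) (he' : e' ∈ O) (hee' : e * e' = 1) :
    ∃ z, inOE F E O θ z ∧ x * z = 1 ∧ z * c z = algebraMap F E e' := by
  have hee'E : algebraMap F E e * algebraMap F E e' = 1 := by rw [← map_mul, hee', map_one]
  obtain ⟨z, hz, hxz⟩ : ∃ z, inOE F E O θ z ∧ x * z = 1 :=
    ⟨algebraMap F E e' * c x, inOE_mul hθ hT hN (inOE_algebraMap he') (inOE_conj hcθ hT hx),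
      by rw [mul_left_comm, hxe, mul_comm, hee'E]⟩
  refine ⟨z, hz, hxz, ?_⟩
  have hnorm : algebraMap F E e * (z * c z) = 1 := by
    rw [← hxe, show x * c x * (z * c z) = x * z * c (x * z) by rw [map_mul]; ring, hxz, map_one,
      one_mul]
  calc z * c z = algebraMap F E e' * (algebraMap F E e * (z * c z)) := by
        linear_combination (-(z * c z)) * hee'E
    _ = algebraMap F E e' := by rw [hnorm, mul_one]

include hθ hcθ hT hN in
theorem exists_mul_eq_one_of_mul_conj_eq [IsLocalRing O] (hϖ : ¬IsUnit ϖ) (hr : 0 < r)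
    {a a' u : F} {b : E} (ha : a = (ϖ : F) ^ r * a') (ha' : a' ∈ O) (hu : u ∈ O)
    (hb : inOE F E O θ b) (hq : b * c b = algebraMap F E (1 - a * (1 + (ϖ : F) ^ r * u))) :
    ∃ z, inOE F E O θ z ∧ b * z = 1 := by
  obtain ⟨u', hu', hu'eq⟩ := exists_one_sub_mul_eq ha ha' hu
  obtain ⟨t', ht', htt'⟩ := exists_mul_one_add_pow_mul_eq_one hϖ hr hu'
  obtain ⟨z, hz, hbz, -⟩ := exists_mul_eq_one_of_mul_conj hθ hcθ hT hN hb (hu'eq ▸ hq)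
    (add_mem (one_mem O) (mul_mem (pow_mem ϖ.2 r) ht')) htt'
  exact ⟨z, hz, hbz⟩

include hθ hT hN in
theorem exists_sub_eq_iff_exists_mul_eq {b b' z : E} (t : F) (hb : inOE F E O θ b)
    (hz : inOE F E O θ z) (hbz : b * z = 1) :
    (∃ y, inOE F E O θ y ∧ b - b' = algebraMap F E t * y) ↔
      ∃ g, (∃ y, inOE F E O θ y ∧ g = 1 + algebraMap F E t * y) ∧ b' = b * g := by
  constructor
  · rintro ⟨y, hy, h⟩
    exact ⟨_, ⟨-(z * y), inOE_neg (inOE_mul hθ hT hN hz hy), rfl⟩,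
      by linear_combination -h + algebraMap F E t * y * hbz⟩
  · rintro ⟨_, ⟨y, hy, rfl⟩, rfl⟩
    exact ⟨-(b * y), inOE_neg (inOE_mul hθ hT hN hb hy), by ring⟩

include hι hT hN in
theorem ι_mem {x : E} (hx : inOE F E O θ x) (i j : Fin 2) : ι x i j ∈ O := by
  obtain ⟨a, ha, b, hb, rfl⟩ := hx
  rw [hι]
  fin_cases i <;> fin_cases j
  exacts [add_mem ha (mul_mem hb hT), mul_mem hb hN, neg_mem hb, ha]

include hι hT hN in
theorem decomp_mem {x y : E} (hx : inOE F E O θ x) (hy : inOE F E O θ y) (i j : Fin 2) :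
    (ι x + jmat T * ι y) i j ∈ O := by
  have hj : ∀ i j, jmat T i j ∈ O := by
    intro i j
    fin_cases i <;> fin_cases j
    exacts [one_mem O, hT, zero_mem O, neg_mem (one_mem O)]
  simp only [Matrix.add_apply, Matrix.mul_apply, Fin.sum_univ_two]
  exact add_mem (ι_mem hι hT hN hx i j) (add_mem (mul_mem (hj i 0) (ι_mem hι hT hN hy 0 j))
    (mul_mem (hj i 1) (ι_mem hι hT hN hy 1 j)))

include hθ hcθ hspan hι in
theorem one_add_jmat_mul_ι_mem_XiSetA {a a' u : F} {b : E} (ha : a = (ϖ : F) ^ r * a')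
    (ha' : a' ∈ O) (hu : u ∈ O) (hb : inOE F E O θ b)
    (hq : b * c b = algebraMap F E (1 - a * (1 + (ϖ : F) ^ r * u))) :
    1 + jmat T * ι b ∈ XiSetA F E O θ T c ι (ϖ : F) r a := by
  have hx : 1 + jmat T * ι b = ι 1 + jmat T * ι b := by rw [ι_one hι]
  obtain ⟨u', hu', hu'eq⟩ := exists_one_sub_mul_eq ha ha' hu
  refine ⟨⟨1, b, ⟨0, ⟨0, zero_mem O, 0, zero_mem O, by simp⟩, by simp⟩, hb,
    ⟨u', hu', by rw [hq, hu'eq]⟩, hx⟩, u, hu, ?_⟩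
  apply (algebraMap F E).injective
  rw [hx, det_decomp hθ hcθ hspan hι, hq, map_one, one_mul, ← map_one (algebraMap F E), ← map_sub]
  congr 1
  ring

include hθ hcθ hspan hι hT hN in
theorem exists_mem_rightCoset'_of_mem_XiSetA [IsLocalRing O] (hϖ : ¬IsUnit ϖ) (hr : 0 < r)
    {a : F} {x : Matrix (Fin 2) (Fin 2) F} (hx : x ∈ XiSetA F E O θ T c ι (ϖ : F) r a) :
    ∃ b : E, inOE F E O θ b ∧
      (∃ u ∈ O, b * c b = algebraMap F E (1 - a * (1 + (ϖ : F) ^ r * u))) ∧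
      x ∈ rightCoset' F O (ϖ : F) r (1 + jmat T * ι b) := by
  obtain ⟨⟨x₁, x₂, ⟨y, hy, hx₁⟩, hx₂, -, rfl⟩, u, hu, hdet⟩ := hx
  have hx₁O : inOE F E O θ x₁ := hx₁ ▸ inOE_add ⟨1, one_mem O, 0, zero_mem O, by simp⟩
    (inOE_mul hθ hT hN (inOE_algebraMap (pow_mem ϖ.2 r)) hy)
  have hU : ι x₁ ∈ Utilde F O (ϖ : F) r :=
    ⟨ι y, ι_mem hι hT hN hy, by rw [hx₁, ι_add hspan hι, ι_one hι, ι_algebraMap_mul hspan hι]⟩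
  obtain ⟨t, ht, hdet₁⟩ := exists_det_eq_of_mem_Utilde hU
  obtain ⟨t', ht', htt'⟩ := exists_mul_one_add_pow_mul_eq_one hϖ hr ht
  have hq₁ : x₁ * c x₁ = algebraMap F E (1 + (ϖ : F) ^ r * t) := by
    rw [← det_ι hθ hcθ hspan hι, hdet₁]
  obtain ⟨z, hz, hx₁z, hqz⟩ := exists_mul_eq_one_of_mul_conj hθ hcθ hT hN hx₁O hq₁
    (add_mem (one_mem O) (mul_mem (pow_mem ϖ.2 r) ht')) htt'
  have hq₂ : x₂ * c x₂ = x₁ * c x₁ - algebraMap F E (a * (1 + (ϖ : F) ^ r * u)) := by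
    rw [← hdet, det_decomp hθ hcθ hspan hι]
    ring
  refine ⟨x₂ * z, inOE_mul hθ hT hN hx₂ hz, ⟨u + t' + (ϖ : F) ^ r * u * t',
    add_mem (add_mem hu ht') (mul_mem (mul_mem (pow_mem ϖ.2 r) hu) ht'), ?_⟩, ι x₁, hU, ?_⟩
  · rw [map_mul, show x₂ * z * (c x₂ * c z) = x₂ * c x₂ * (z * c z) by ring, hq₂, hqz, hq₁,
      ← map_sub, ← map_mul]
    congr 1
    linear_combination htt'
  · rw [add_mul, one_mul, mul_assoc, ← ι_mul hθ hspan hι, mul_assoc, mul_comm z, hx₁z, mul_one]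

include hθ hcθ hspan hι hT hN in
theorem rightCoset'_eq_iff_exists_eq_add [IsLocalRing O] (hϖ : ¬IsUnit ϖ) (hr : 0 < r)
    (hd : T ^ 2 - 4 * N ≠ 0)
    (hM2 : ∀ m : Matrix (Fin 2) (Fin 2) F, (∀ i j, m i j ∈ O) →
      ∃ x₁ x₂ : E, inOE F E O θ x₁ ∧ inOE F E O θ x₂ ∧ m = ι x₁ + jmat T * ι x₂)
    {b b' : E} (hb : inOE F E O θ b) :
    rightCoset' F O (ϖ : F) r (1 + jmat T * ι b) =
        rightCoset' F O (ϖ : F) r (1 + jmat T * ι b') ↔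
      ∃ m, inOE F E O θ m ∧ b' = b + algebraMap F E ((ϖ : F) ^ r) * (1 - b * c b) * m := by
  have hx : ∀ b : E, 1 + jmat T * ι b = ι 1 + jmat T * ι b := fun b => by rw [ι_one hι]
  constructor
  · intro h
    obtain ⟨_, ⟨n, hn, rfl⟩, hb'⟩ :
        1 + jmat T * ι b' ∈ rightCoset' F O (ϖ : F) r (1 + jmat T * ι b) :=
      h ▸ mem_rightCoset'_self _
    obtain ⟨m₁, m₂, -, hm₂, rfl⟩ := hM2 n hn
    rw [one_add_jmat_mul_ι_mul_one_add_smul hθ hcθ hspan hι, hx] at hb'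
    obtain ⟨h₁, h₂⟩ := decomp_injective hspan hι hd hb'
    exact ⟨m₂, hm₂, by linear_combination h₂ - b * h₁⟩
  · rintro ⟨m, hm, rfl⟩
    have hm₁ : inOE F E O θ (-(c b * m)) :=
      inOE_neg (inOE_mul hθ hT hN (inOE_conj hcθ hT hb) hm)
    rw [← rightCoset'_mul_of_mem_Utilde hϖ hr (x := 1 + jmat T * ι b)
      ⟨_, decomp_mem hι hT hN hm₁ hm, rfl⟩]
    congr 1
    rw [one_add_jmat_mul_ι_mul_one_add_smul hθ hcθ hspan hι, hx]
    congr 2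
    · ring
    · congr 1
      ring

include hθ hcθ hspan hι hT hN in
theorem rightCoset'_eq_iff_sub_mem [IsLocalRing O] (hϖ : ¬IsUnit ϖ) (hr : 0 < r)
    (hd : T ^ 2 - 4 * N ≠ 0)
    (hM2 : ∀ m : Matrix (Fin 2) (Fin 2) F, (∀ i j, m i j ∈ O) →
      ∃ x₁ x₂ : E, inOE F E O θ x₁ ∧ inOE F E O θ x₂ ∧ m = ι x₁ + jmat T * ι x₂)
    {s : ℕ} {w : Oˣ} {u : F} (hu : u ∈ O) {b b' : E} (hb : inOE F E O θ b)
    (hq : b * c b = algebraMap F E (1 - (ϖ : F) ^ s * w * (1 + (ϖ : F) ^ r * u))) :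
    rightCoset' F O (ϖ : F) r (1 + jmat T * ι b) =
        rightCoset' F O (ϖ : F) r (1 + jmat T * ι b') ↔
      ∃ y, inOE F E O θ y ∧ b - b' = algebraMap F E ((ϖ : F) ^ (r + s)) * y := by
  obtain ⟨t', ht', htt'⟩ := exists_mul_one_add_pow_mul_eq_one hϖ hr hu
  -- `1 - q(b) = ϖ^s ε` with `ε` a unit of `O`
  set ε : F := w * (1 + (ϖ : F) ^ r * u)
  set ε' : F := ((w⁻¹ : Oˣ) : O) * (1 + (ϖ : F) ^ r * t')
  have hε : ε ∈ O := mul_mem w.1.2 (add_mem (one_mem O) (mul_mem (pow_mem ϖ.2 r) hu))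
  have hε' : ε' ∈ O := mul_mem w⁻¹.1.2 (add_mem (one_mem O) (mul_mem (pow_mem ϖ.2 r) ht'))
  have hεε' : algebraMap F E ε * algebraMap F E ε' = 1 := by
    have hw : ((w : O) : F) * ((w⁻¹ : Oˣ) : O) = 1 := by
      exact_mod_cast congrArg ((↑) : O → F) w.mul_inv
    rw [← map_mul, ← map_one (algebraMap F E)]
    congr 1
    linear_combination (1 + (ϖ : F) ^ r * u) * (1 + (ϖ : F) ^ r * t') * hw + htt'
  have h1q : 1 - b * c b = algebraMap F E ((ϖ : F) ^ s) * algebraMap F E ε := by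
    rw [hq, ← map_mul, ← map_one (algebraMap F E), ← map_sub]
    congr 1
    ring
  rw [rightCoset'_eq_iff_exists_eq_add hθ hcθ hspan hι hT hN hϖ hr hd hM2 hb, pow_add, map_mul]
  constructor
  · rintro ⟨m, hm, rfl⟩
    refine ⟨-(algebraMap F E ε * m), inOE_neg (inOE_mul hθ hT hN (inOE_algebraMap hε) hm), ?_⟩
    rw [h1q]
    ring
  · rintro ⟨y, hy, hy'⟩
    refine ⟨-(algebraMap F E ε' * y), inOE_neg (inOE_mul hθ hT hN (inOE_algebraMap hε') hy), ?_⟩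
    rw [h1q]
    linear_combination
      -hy' + algebraMap F E ((ϖ : F) ^ r) * algebraMap F E ((ϖ : F) ^ s) * y * hεε'

end QuadraticExtension

end OrthogonalDecomposition

theorem xi_a_right_coset_classification_general
    (F E : Type*) [Field F] [Field E] [Algebra F E]
    (T N : F) (θ : E)
    (hθ : θ ^ 2 = algebraMap F E T * θ - algebraMap F E N)
    (hrep : ∀ x : E, ∃! p : F × F, x = algebraMap F E p.1 + θ * algebraMap F E p.2)
    (c : E ≃ₐ[F] E)
    (hcθ : c θ = algebraMap F E T - θ)
    (hsep : algebraMap F E T - θ ≠ θ)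
    (ι : E → Matrix (Fin 2) (Fin 2) F)
    (hι : ∀ a b : F, ι (algebraMap F E a + θ * algebraMap F E b) = !![a + b * T, b * N; -b, a])
    (O : Subring F) [IsDiscreteValuationRing O]
    (ϖ : O) (hϖ : Irreducible ϖ)
    (hT : T ∈ O) (hN : N ∈ O)
    (hM2 : ∀ m : Matrix (Fin 2) (Fin 2) F, (∀ i j, m i j ∈ O) →
      ∃ x₁ x₂ : E, inOE F E O θ x₁ ∧ inOE F E O θ x₂ ∧ m = ι x₁ + jmat T * ι x₂)
    (r : ℕ) (hr : 1 ≤ r)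
    (a : F) (s : ℕ) (hs : r ≤ s)
    (ha : ∃ w : Oˣ, a = (ϖ : F) ^ s * ((w : O) : F)) :
    -- (1)
    (∀ b : E, inOE F E O θ b →
      (∃ u ∈ O, b * c b = algebraMap F E (1 - a * (1 + (ϖ : F) ^ r * u))) →
      (1 + jmat T * ι b) ∈ XiSetA F E O θ T (⇑c) ι (ϖ : F) r a) ∧
    -- (2)
    (∀ x ∈ XiSetA F E O θ T (⇑c) ι (ϖ : F) r a,
      ∃ b : E, inOE F E O θ b ∧
        (∃ u ∈ O, b * c b = algebraMap F E (1 - a * (1 + (ϖ : F) ^ r * u))) ∧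
        x ∈ rightCoset' F O (ϖ : F) r (1 + jmat T * ι b)) ∧
    -- (3)
    (∀ b b' : E, inOE F E O θ b →
      (∃ u ∈ O, b * c b = algebraMap F E (1 - a * (1 + (ϖ : F) ^ r * u))) →
      inOE F E O θ b' →
      (∃ u ∈ O, b' * c b' = algebraMap F E (1 - a * (1 + (ϖ : F) ^ r * u))) →
      (rightCoset' F O (ϖ : F) r (1 + jmat T * ι b) =
        rightCoset' F O (ϖ : F) r (1 + jmat T * ι b') ↔
        ∃ y : E, inOE F E O θ y ∧ b - b' = algebraMap F E ((ϖ : F) ^ (r + s)) * y)) ∧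
    -- (4)
    (∀ b b' : E, inOE F E O θ b →
      (∃ u ∈ O, b * c b = algebraMap F E (1 - a * (1 + (ϖ : F) ^ r * u))) →
      inOE F E O θ b' →
      (∃ u ∈ O, b' * c b' = algebraMap F E (1 - a * (1 + (ϖ : F) ^ r * u))) →
      (rightCoset' F O (ϖ : F) r (1 + jmat T * ι b) =
        rightCoset' F O (ϖ : F) r (1 + jmat T * ι b') ↔
        ∃ g : E, (∃ y : E, inOE F E O θ y ∧ g = 1 + algebraMap F E ((ϖ : F) ^ (r + s)) * y) ∧
          b' = b * g)) := by
  have hspan : ∀ x : E, ∃ a b : F, x = algebraMap F E a + θ * algebraMap F E b := fun x =>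
    let ⟨p, hp, _⟩ := hrep x
    ⟨p.1, p.2, hp⟩
  have hd := OrthogonalDecomposition.discr_ne_zero hθ hsep
  have hϖ' : ¬IsUnit ϖ := hϖ.not_isUnit
  obtain ⟨w, rfl⟩ := ha
  have ha : (ϖ : F) ^ s * w = (ϖ : F) ^ r * ((ϖ : F) ^ (s - r) * w) := by
    rw [← mul_assoc, ← pow_add, Nat.add_sub_cancel' hs]
  have ha' : (ϖ : F) ^ (s - r) * w ∈ O := mul_mem (pow_mem ϖ.2 _) w.1.2
  refine ⟨?_, fun x hx => ?_, ?_, ?_⟩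
  · rintro b hb ⟨u, hu, hq⟩
    exact OrthogonalDecomposition.one_add_jmat_mul_ι_mem_XiSetA hθ hcθ hspan hι ha ha' hu hb hq
  · exact OrthogonalDecomposition.exists_mem_rightCoset'_of_mem_XiSetA hθ hcθ hspan hι hT hN hϖ'
      hr hx
  · rintro b b' hb ⟨u, hu, hq⟩ - -
    exact OrthogonalDecomposition.rightCoset'_eq_iff_sub_mem hθ hcθ hspan hι hT hN hϖ' hr hd hM2
      hu hb hq
  · rintro b b' hb ⟨u, hu, hq⟩ - -
    obtain ⟨z, hz, hbz⟩ := OrthogonalDecomposition.exists_mul_eq_one_of_mul_conj_eq hθ hcθ hT hN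
      hϖ' hr ha ha' hu hb hq
    rw [OrthogonalDecomposition.rightCoset'_eq_iff_sub_mem hθ hcθ hspan hι hT hN hϖ' hr hd hM2
      hu hb hq]
    exact OrthogonalDecomposition.exists_sub_eq_iff_exists_mul_eq hθ hT hN _ hb hz hbz

/-- **Lemma 4.2: right-coset classification of `Ξ(ϖ^r)_a`.**
In the setting of the orthogonal decomposition of `M₂(F)` (with `F` the fraction field of a
discrete valuation ring `O_F ∋ T, N` with uniformizer `ϖ`, `E = F(θ)`, `O_E = O_F + θ O_F`,
`q = N_{E/F}`, and assuming `M₂(O_F) = ι(O_E) + j·ι(O_E)`), let `r ≥ 1`, and let `a ∈ F^×`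
with `v(a) = s ≥ r`.  Writing `x(b) := 1 + j·ι(b)`:
(1) for every `b ∈ O_E` with `q(b) ∈ 1 − a(1 + ϖ^r O_F)`, the element `x(b)` lies in
`Ξ(ϖ^r)_a`;
(2) every `x ∈ Ξ(ϖ^r)_a` lies in `x(b)·Ũ` for some such `b`;
(3) for such `b, b'` one has `x(b)·Ũ = x(b')·Ũ` if and only if `b − b' ∈ ϖ^{r+s} O_E`;
(4) consequently, `b ↦ x(b)·Ũ` induces a bijection from the quotient of
`{b ∈ O_E : q(b) ∈ 1 − a(1 + ϖ^r O_F)}` by the multiplication action of `1 + ϖ^{r+s} O_E`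
onto the set of right cosets `{x·Ũ : x ∈ Ξ(ϖ^r)_a}`. -/
theorem xi_a_right_coset_classification
    (F E : Type*) [Field F] [Field E] [Algebra F E]
    (T N : F) (θ : E)
    (hθ : θ ^ 2 = algebraMap F E T * θ - algebraMap F E N)
    (hrep : ∀ x : E, ∃! p : F × F, x = algebraMap F E p.1 + θ * algebraMap F E p.2)
    (c : E ≃ₐ[F] E)
    (hcθ : c θ = algebraMap F E T - θ)
    (hsep : algebraMap F E T - θ ≠ θ)
    (ι : E → Matrix (Fin 2) (Fin 2) F)
    (hι : ∀ a b : F, ι (algebraMap F E a + θ * algebraMap F E b) = !![a + b * T, b * N; -b, a])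
    (O : Subring F) [IsDomain O] [IsDiscreteValuationRing O]
    (hfrac : ∀ x : F, ∃ y z : O, (z : F) ≠ 0 ∧ x * (z : F) = (y : F))
    (ϖ : O) (hϖ : Irreducible ϖ)
    (hT : T ∈ O) (hN : N ∈ O)
    (hM2 : ∀ m : Matrix (Fin 2) (Fin 2) F, (∀ i j, m i j ∈ O) →
      ∃ x₁ x₂ : E, inOE F E O θ x₁ ∧ inOE F E O θ x₂ ∧ m = ι x₁ + jmat T * ι x₂)
    (r : ℕ) (hr : 1 ≤ r)
    (a : F) (s : ℕ) (hs : r ≤ s)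
    (ha : ∃ w : Oˣ, a = (ϖ : F) ^ s * ((w : O) : F)) :
    -- (1)
    (∀ b : E, inOE F E O θ b →
      (∃ u ∈ O, b * c b = algebraMap F E (1 - a * (1 + (ϖ : F) ^ r * u))) →
      (1 + jmat T * ι b) ∈ XiSetA F E O θ T (⇑c) ι (ϖ : F) r a) ∧
    -- (2)
    (∀ x ∈ XiSetA F E O θ T (⇑c) ι (ϖ : F) r a,
      ∃ b : E, inOE F E O θ b ∧
        (∃ u ∈ O, b * c b = algebraMap F E (1 - a * (1 + (ϖ : F) ^ r * u))) ∧
        x ∈ rightCoset' F O (ϖ : F) r (1 + jmat T * ι b)) ∧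
    -- (3)
    (∀ b b' : E, inOE F E O θ b →
      (∃ u ∈ O, b * c b = algebraMap F E (1 - a * (1 + (ϖ : F) ^ r * u))) →
      inOE F E O θ b' →
      (∃ u ∈ O, b' * c b' = algebraMap F E (1 - a * (1 + (ϖ : F) ^ r * u))) →
      (rightCoset' F O (ϖ : F) r (1 + jmat T * ι b) =
        rightCoset' F O (ϖ : F) r (1 + jmat T * ι b') ↔
        ∃ y : E, inOE F E O θ y ∧ b - b' = algebraMap F E ((ϖ : F) ^ (r + s)) * y)) ∧
    -- (4)
    (∀ b b' : E, inOE F E O θ b →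
      (∃ u ∈ O, b * c b = algebraMap F E (1 - a * (1 + (ϖ : F) ^ r * u))) →
      inOE F E O θ b' →
      (∃ u ∈ O, b' * c b' = algebraMap F E (1 - a * (1 + (ϖ : F) ^ r * u))) →
      (rightCoset' F O (ϖ : F) r (1 + jmat T * ι b) =
        rightCoset' F O (ϖ : F) r (1 + jmat T * ι b') ↔
        ∃ g : E, (∃ y : E, inOE F E O θ y ∧ g = 1 + algebraMap F E ((ϖ : F) ^ (r + s)) * y) ∧
          b' = b * g)) :=
  xi_a_right_coset_classification_general F E T N θ hθ hrep c hcθ hsep ι hι O ϖ hϖ hT hN hM2 r hr a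
    s hs ha
end

section
/- (Image of the map t ↦ t^c/t, from the proof of Lemma 4.3(2).) There exists r₀ ≥ 1 (depending only on E/F and θ) such that for every integer r ≥ r₀, the image of the group homomorphism 1 + ϖ^rO_E → E^×, t ↦ t^c/t, is exactly the group {u ∈ 1 + ϖ^r(θ − θ^c)O_E : N_{E/F}(u) = 1}. -/
/-- The ring of integers of a `p`-adic field: the integral closure of `ℤ_[p]`. -/
noncomputable def ringOfIntegers (p : ℕ) [Fact p.Prime] (K : Type*) [Field K]
    [Algebra ℚ_[p] K] : Subring K :=
  letI : Algebra ℤ_[p] K :=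
    ((algebraMap ℚ_[p] K).comp (PadicInt.Coe.ringHom)).toAlgebra
  (integralClosure ℤ_[p] K).toSubring

/-!
Measure elements of `E` by the spectral norm extending the `p`-adic norm. Since `ℤ_p` is
integrally closed, `x` is integral over `ℤ_p` exactly when its minimal polynomial over `ℚ_p` has
integral coefficients, i.e. when its spectral norm is at most `1`. The spectral norm is
multiplicative and nonarchimedean, so the non-unit `ϖ` has norm `< 1`, and for every `r ≥ 1`
each `1 + ϖ^r y` with `y ∈ O_E` has norm `1` and is a unit of `O_E`; one may take `r₀ = 1`.

The rest is algebra. Writing `y = a + θ b`, one gets `tᶜ/t - 1 = -ϖ^r (θ - θᶜ) b / t` for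
`t = 1 + ϖ^r y`. Conversely, if `u = 1 + ϖ^r (θ - θᶜ) y` satisfies `u uᶜ = 1`, then
`y - yᶜ = ϖ^r (θ - θᶜ) y yᶜ`, and this identity gives `tᶜ/t = u` for `t = (1 + ϖ^r θ y)⁻¹`.
-/

open Polynomial

section SpectralNorm

variable {p : ℕ} [Fact p.Prime] {K : Type*} [Field K] [Algebra ℚ_[p] K]
  [Algebra.IsAlgebraic ℚ_[p] K]

theorem mem_ringOfIntegers_iff_spectralNorm_le_one {x : K} :
    x ∈ ringOfIntegers p K ↔ spectralNorm ℚ_[p] K x ≤ 1 := by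
  let _ : Algebra ℤ_[p] K := ((algebraMap ℚ_[p] K).comp PadicInt.Coe.ringHom).toAlgebra
  have : IsScalarTower ℤ_[p] ℚ_[p] K := .of_algebraMap_eq fun _ => rfl
  change IsIntegral ℤ_[p] x ↔ _
  rw [spectralNorm, spectralValue_le_one_iff (minpoly.monic (Algebra.IsIntegral.isIntegral x))]
  refine ⟨fun hx n => ?_, fun h => ?_⟩
  · rw [minpoly.isIntegrallyClosed_eq_field_fractions' ℚ_[p] hx, coeff_map]
    exact PadicInt.norm_le_one _
  · obtain ⟨q, hq, -, hmonic⟩ := lifts_and_natDegree_eq_and_monic (p := minpoly ℚ_[p] x)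
      ((lifts_iff_coeff_lifts (f := algebraMap ℤ_[p] ℚ_[p]) _).2 fun n => ⟨⟨_, h n⟩, rfl⟩)
      (minpoly.monic (Algebra.IsIntegral.isIntegral x))
    exact ⟨q, hmonic, by rw [← aeval_def, ← aeval_map_algebraMap ℚ_[p], hq, minpoly.aeval]⟩

theorem inv_mem_ringOfIntegers_of_spectralNorm_eq_one {x : K}
    (hx : spectralNorm ℚ_[p] K x = 1) : x⁻¹ ∈ ringOfIntegers p K := by
  rw [mem_ringOfIntegers_iff_spectralNorm_le_one, ← spectralMulAlgNorm_def, map_inv₀,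
    spectralMulAlgNorm_def, hx, inv_one]

theorem spectralNorm_lt_one_of_not_isUnit {x : ringOfIntegers p K} (hx : ¬IsUnit x) :
    spectralNorm ℚ_[p] K x < 1 := by
  refine (mem_ringOfIntegers_iff_spectralNorm_le_one.1 x.2).lt_of_ne fun h => hx ?_
  have hx0 : (x : K) ≠ 0 := fun h0 => by simp [h0, spectralNorm_zero] at h
  let xinv : ringOfIntegers p K := ⟨_, inv_mem_ringOfIntegers_of_spectralNorm_eq_one h⟩
  exact IsUnit.of_mul_eq_one xinv (Subtype.ext (mul_inv_cancel₀ hx0))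

theorem exists_mul_one_add_eq_one_of_spectralNorm_lt_one {m : K}
    (hm : spectralNorm ℚ_[p] K m < 1) :
    ∃ z ∈ ringOfIntegers p K, (1 + m) * z = 1 := by
  have hnorm : spectralNorm ℚ_[p] K (1 + m) = 1 := by
    have hna : IsNonarchimedean (spectralMulAlgNorm ℚ_[p] K) := isNonarchimedean_spectralNorm
    rw [← spectralMulAlgNorm_def] at hm ⊢
    rw [hna.add_eq_max_of_ne (by rw [map_one]; exact hm.ne'), map_one, max_eq_left hm.le]
  have hne : 1 + m ≠ 0 := fun h0 => by simp [h0, spectralNorm_zero] at hnorm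
  exact ⟨_, inv_mem_ringOfIntegers_of_spectralNorm_eq_one hnorm, mul_inv_cancel₀ hne⟩

end SpectralNorm

section Tower

variable {p : ℕ} [Fact p.Prime] {F E : Type*} [Field F] [Field E] [Algebra ℚ_[p] F]
  [Algebra ℚ_[p] E] [Algebra F E] [IsScalarTower ℚ_[p] F E] [Algebra.IsAlgebraic ℚ_[p] F]
  [Algebra.IsAlgebraic ℚ_[p] E]

theorem exists_mul_one_add_pow_mul_eq_one {ϖ : ringOfIntegers p F} (hϖ : ¬IsUnit ϖ) {r : ℕ}
    (hr : r ≠ 0) {y : E} (hy : y ∈ ringOfIntegers p E) :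
    ∃ z ∈ ringOfIntegers p E, (1 + algebraMap F E ((ϖ : F) ^ r) * y) * z = 1 := by
  apply exists_mul_one_add_eq_one_of_spectralNorm_lt_one
  have hϖ1 := spectralNorm_lt_one_of_not_isUnit hϖ
  calc spectralNorm ℚ_[p] E (algebraMap F E ((ϖ : F) ^ r) * y)
      = spectralNorm ℚ_[p] F ϖ ^ r * spectralNorm ℚ_[p] E y := by
        rw [map_pow, ← spectralMulAlgNorm_def, map_mul, map_pow, spectralMulAlgNorm_def,
          spectralMulAlgNorm_def, ← spectralNorm.eq_of_tower]
    _ ≤ spectralNorm ℚ_[p] F ϖ ^ r :=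
        mul_le_of_le_one_right (pow_nonneg (spectralNorm_nonneg _) _)
          (mem_ringOfIntegers_iff_spectralNorm_le_one.1 hy)
    _ < 1 := pow_lt_one₀ (spectralNorm_nonneg _) hϖ1 hr

end Tower

theorem AlgEquiv.involutive_of_finrank_eq_two {F E : Type*} [Field F] [Field E] [Algebra F E]
    (h : Module.finrank F E = 2) (c : E ≃ₐ[F] E) : Function.Involutive c := by
  have : FiniteDimensional F E := .of_finrank_pos (by omega)
  have hcard : orderOf c ≤ 2 := h ▸ (orderOf_le_card_univ).trans AlgEquiv.card_le
  have hsq : c ^ 2 = 1 := by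
    interval_cases hc : orderOf c
    · exact absurd hc (orderOf_pos c).ne'
    · rw [orderOf_eq_one_iff.1 hc, one_pow]
    · rw [← hc, pow_orderOf_eq_one]
  exact DFunLike.congr_fun hsq

section ConjDivSelf

variable {E : Type*} [Field E] {σ : E →+* E} {O : Subring E} {π θ : E}

theorem image_map_div_self_eq (hσ : Function.Involutive σ) (hπ : σ π = π) (hπ0 : π ≠ 0)
    (hθ : σ θ ≠ θ) (hθO : θ ∈ O) (hdiff : ∀ y ∈ O, ∃ b ∈ O, y - σ y = (θ - σ θ) * b)
    (hunit : ∀ m ∈ O, ∃ z ∈ O, (1 + π * m) * z = 1) :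
    {z | ∃ t, (∃ y ∈ O, t = 1 + π * y) ∧ z = σ t / t} =
      {u | (∃ y ∈ O, u = 1 + π * (θ - σ θ) * y) ∧ u * σ u = 1} := by
  ext u
  constructor
  · rintro ⟨t, ⟨y, hy, rfl⟩, rfl⟩
    obtain ⟨z, hz, htz⟩ := hunit y hy
    obtain ⟨b, hb, hyb⟩ := hdiff y hy
    have ht0 : 1 + π * y ≠ 0 := left_ne_zero_of_mul_eq_one htz
    have hσt0 : σ (1 + π * y) ≠ 0 := (map_ne_zero σ).2 ht0
    refine ⟨⟨-(b * z), neg_mem (mul_mem hb hz), ?_⟩, ?_⟩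
    · rw [div_eq_iff ht0, map_add, map_one, map_mul, hπ]
      linear_combination (-π) * hyb + (π * (θ - σ θ) * b) * htz
    · rw [map_div₀, hσ]
      field_simp
  · rintro ⟨⟨y, hy, rfl⟩, hnorm⟩
    obtain ⟨z, hz, hz_inv⟩ := hunit (θ * y) (mul_mem hθO hy)
    have hz0 : z ≠ 0 := right_ne_zero_of_mul_eq_one hz_inv
    have hσz_inv : (1 + π * (σ θ * σ y)) * σ z = 1 := by
      simpa [hπ] using congrArg σ hz_inv
    have hy_sub : y - σ y = π * (θ - σ θ) * (y * σ y) := by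
      have hσu : σ (1 + π * (θ - σ θ) * y) = 1 + π * (σ θ - θ) * σ y := by simp [hπ, hσ θ]
      rw [hσu] at hnorm
      have h0 : π * (θ - σ θ) * ((y - σ y) - π * (θ - σ θ) * (y * σ y)) = 0 := by
        linear_combination hnorm
      linear_combination (mul_eq_zero.1 h0).resolve_left (mul_ne_zero hπ0 (sub_ne_zero.2 hθ.symm))
    have hz_sub : z = 1 + π * -(θ * y * z) := by linear_combination hz_inv
    refine ⟨z, ⟨-(θ * y * z), neg_mem (mul_mem (mul_mem hθO hy) hz), hz_sub⟩, ?_⟩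
    rw [eq_div_iff hz0]
    linear_combination (σ z) * hz_inv - (1 + π * (θ - σ θ) * y) * z * hσz_inv -
      (z * σ z * π * σ θ) * hy_sub

end ConjDivSelf

/-- **Image of the map `t ↦ tᶜ/t` (from the proof of Lemma 4.3(2)).**
Let `F` be a finite extension of `ℚ_p` with ring of integers `O_F` and uniformizer `ϖ`, let
`E/F` be a quadratic extension with ring of integers `O_E = O_F + θ·O_F`, and let `c` be the
nontrivial `F`-automorphism of `E`.  There exists `r₀ ≥ 1` (depending only on `E/F` and `θ`)
such that for every `r ≥ r₀`, the image of the group homomorphism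
`1 + ϖ^r O_E → E^×, t ↦ tᶜ/t` is exactly `{u ∈ 1 + ϖ^r(θ − θᶜ)O_E : N_{E/F}(u) = 1}`. -/
theorem image_of_conj_div_self
    (p : ℕ) [Fact p.Prime]
    (F : Type*) [Field F] [Algebra ℚ_[p] F] [FiniteDimensional ℚ_[p] F]
    (E : Type*) [Field E] [Algebra ℚ_[p] E] [Algebra F E] [IsScalarTower ℚ_[p] F E]
    (hquad : Module.finrank F E = 2)
    (c : E ≃ₐ[F] E)
    (ϖ : ringOfIntegers p F) (hϖ : Irreducible ϖ)
    (θ : E) (hθmem : θ ∈ ringOfIntegers p E)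
    (hgen : ∀ x : E, x ∈ ringOfIntegers p E ↔
      ∃ a b : ringOfIntegers p F, x = algebraMap F E (a : F) + θ * algebraMap F E (b : F))
    (hθc : c θ ≠ θ) :
    ∃ r₀ : ℕ, 1 ≤ r₀ ∧ ∀ r : ℕ, r₀ ≤ r →
      {z : E | ∃ t : E,
          (∃ y ∈ ringOfIntegers p E, t = 1 + algebraMap F E ((ϖ : F) ^ r) * y) ∧
          z = c t / t} =
      {u : E | (∃ y ∈ ringOfIntegers p E,
          u = 1 + algebraMap F E ((ϖ : F) ^ r) * (θ - c θ) * y) ∧ u * c u = 1} := by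
  have : FiniteDimensional F E := .of_finrank_pos (by omega)
  have : FiniteDimensional ℚ_[p] E := .trans ℚ_[p] F E
  refine ⟨1, le_rfl, fun r hr => ?_⟩
  have hπ0 : algebraMap F E ((ϖ : F) ^ r) ≠ 0 := by
    simpa using pow_ne_zero r hϖ.ne_zero
  refine image_map_div_self_eq (σ := (c : E →+* E)) (c.involutive_of_finrank_eq_two hquad)
    (c.commutes _) hπ0 hθc hθmem (fun y hy => ?_)
    (fun m hm => exists_mul_one_add_pow_mul_eq_one hϖ.not_isUnit (by omega) hm)
  obtain ⟨a, b, rfl⟩ := (hgen y).1 hy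
  refine ⟨algebraMap F E b, (hgen _).2 ⟨b, 0, by simp⟩, ?_⟩
  simp only [RingHom.coe_coe, map_add, map_mul, AlgEquiv.commutes]
  ring
end
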